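/- Let μ be a probability measure supported on [c, ∞)ᵈ ⊂ ℝᵈ with finite first moments, let a ∈ {1,…,d}, and suppose m := ∫ y_a dμ satisfies m − δ > c for some δ > 0. Define t : ℝᵈ → ℝᵈ by t(y) = y − (δ(y_a − c)/(m − c))·eₐ. Then t_♯μ is supported on [c, ∞)ᵈ, W₁(μ, t_♯μ) ≤ δ, and ∫ y_a d(t_♯μ) = m − δ. -/

import Mathlib

open MeasureTheory Finset

/-- ℓ¹ distance on ℝᵈ. -/
noncomputable def l1dist {d : ℕ} (y y' : Fin d → ℝ) : ℝ := ∑ a, |y a - y' a|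

/-- 1-Wasserstein distance w.r.t. a ground cost `c`: infimum over couplings of the
expected cost. -/
noncomputable def W1 {E : Type*} [MeasurableSpace E] (c : E → E → ℝ)
    (μ ν : Measure E) : ℝ :=
  sInf {r : ℝ | ∃ π : Measure (E × E), IsProbabilityMeasure π ∧
    π.map Prod.fst = μ ∧ π.map Prod.snd = ν ∧ ∫ p, c p.1 p.2 ∂π = r}

/-! The proof couples `μ` with `t_♯μ` through the deterministic coupling `y ↦ (y, t y)`. The map
`t` moves only the `a`-th coordinate, towards `c` by the fraction `s = δ / (m - c) ≤ 1` of its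
distance to `c`; so it keeps `[c, ∞)ᵈ`, lowers the mean of that coordinate by `s (m - c) = δ`,
and its transport cost is `∫ s (y_a - c) dμ = δ`. -/

theorem W1_map_le_integral {E : Type*} [MeasurableSpace E] {cost : E → E → ℝ}
    (hcost_nonneg : ∀ x y, 0 ≤ cost x y) (hcost : Measurable (Function.uncurry cost))
    (μ : Measure E) [IsProbabilityMeasure μ] {T : E → E} (hT : Measurable T) :
    W1 cost μ (μ.map T) ≤ ∫ y, cost y (T y) ∂μ := by
  have hgraph : Measurable fun y => (y, T y) := measurable_id.prodMk hT
  refine csInf_le ⟨0, ?_⟩ ⟨μ.map fun y => (y, T y),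
    Measure.isProbabilityMeasure_map hgraph.aemeasurable, ?_, ?_, ?_⟩
  · rintro r ⟨π, -, -, -, rfl⟩
    exact integral_nonneg fun p => hcost_nonneg p.1 p.2
  · rw [Measure.map_map measurable_fst hgraph]
    exact Measure.map_id
  · rw [Measure.map_map measurable_snd hgraph]
    rfl
  · exact integral_map hgraph.aemeasurable hcost.aestronglyMeasurable

theorem measurable_l1dist_uncurry {d : ℕ} :
    Measurable (Function.uncurry (l1dist (d := d))) := by
  change Measurable fun p : (Fin d → ℝ) × (Fin d → ℝ) => ∑ i, |p.1 i - p.2 i|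
  fun_prop

theorem l1dist_nonneg {d : ℕ} (y y' : Fin d → ℝ) : 0 ≤ l1dist y y' :=
  Finset.sum_nonneg fun _ _ => abs_nonneg _

theorem l1dist_update_self {d : ℕ} (y : Fin d → ℝ) (a : Fin d) (x : ℝ) :
    l1dist y (Function.update y a x) = |y a - x| := by
  unfold l1dist
  rw [Finset.sum_eq_single a]
  · simp
  · intro b _ hb
    simp [hb]
  · simp

section ContractCoord

variable {d : ℕ} (a : Fin d) (c s : ℝ)

noncomputable def contractCoord (y : Fin d → ℝ) : Fin d → ℝ :=
  Function.update y a (y a - s * (y a - c))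

theorem measurable_contractCoord : Measurable (contractCoord a c s) :=
  measurable_update'.comp (measurable_id.prodMk (by fun_prop))

theorem contractCoord_apply_self (y : Fin d → ℝ) :
    contractCoord a c s y a = y a - s * (y a - c) :=
  Function.update_self _ _ _

theorem le_contractCoord_apply {s} (hs : s ≤ 1) {y : Fin d → ℝ} (hy : ∀ i, c ≤ y i) (i : Fin d) :
    c ≤ contractCoord a c s y i := by
  rcases eq_or_ne i a with rfl | hi
  · rw [contractCoord_apply_self]
    nlinarith [hy i]
  · rw [contractCoord, Function.update_of_ne hi]
    exact hy i

theorem l1dist_contractCoord (y : Fin d → ℝ) :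
    l1dist y (contractCoord a c s y) = |s * (y a - c)| := by
  rw [contractCoord, l1dist_update_self, sub_sub_cancel]

variable (μ : Measure (Fin d → ℝ)) [IsProbabilityMeasure μ]

theorem integral_contractCoord_apply_self (ha : Integrable (fun y => y a) μ) :
    ∫ y, contractCoord a c s y a ∂μ = (∫ y, y a ∂μ) - s * ((∫ y, y a ∂μ) - c) := by
  have ha_sub : Integrable (fun y => y a - c) μ := ha.sub (integrable_const c)
  simp_rw [contractCoord_apply_self]
  rw [integral_sub ha (ha_sub.const_mul s), integral_const_mul,
    integral_sub ha (integrable_const c), integral_const, probReal_univ, one_smul]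

theorem integral_l1dist_contractCoord {s} (hs : 0 ≤ s) (ha : Integrable (fun y => y a) μ)
    (hsupp : ∀ᵐ y ∂μ, c ≤ y a) :
    ∫ y, l1dist y (contractCoord a c s y) ∂μ = s * ((∫ y, y a ∂μ) - c) := by
  have hcost : (fun y => l1dist y (contractCoord a c s y)) =ᵐ[μ] fun y => s * (y a - c) := by
    filter_upwards [hsupp] with y hy
    rw [l1dist_contractCoord, abs_of_nonneg (mul_nonneg hs (sub_nonneg.2 hy))]
  rw [integral_congr_ae hcost, integral_const_mul, integral_sub ha (integrable_const c),
    integral_const, probReal_univ, one_smul]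

end ContractCoord

theorem stmt_4 {d : ℕ} (μ : Measure (Fin d → ℝ)) [IsProbabilityMeasure μ]
    (hμ : ∀ b : Fin d, Integrable (fun y => y b) μ)
    (c : ℝ) (hsupp : ∀ᵐ y ∂μ, ∀ i, c ≤ y i)
    (a : Fin d) (m : ℝ) (hm : m = ∫ y, y a ∂μ)
    (δ : ℝ) (hδ : 0 < δ) (hfeas : c < m - δ)
    (t : (Fin d → ℝ) → (Fin d → ℝ))
    (ht : t = fun y i => if i = a then y a - δ * (y a - c) / (m - c) else y i) :
    (∀ᵐ y ∂(μ.map t), ∀ i, c ≤ y i) ∧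
      W1 l1dist μ (μ.map t) ≤ δ ∧
      (∫ y, y a ∂(μ.map t)) = m - δ := by
  have hmc : 0 < m - c := by linarith
  have hs_le : δ / (m - c) ≤ 1 := (div_le_one hmc).2 (by linarith)
  have hδs : δ / (m - c) * (m - c) = δ := div_mul_cancel₀ δ hmc.ne'
  have ht' : t = contractCoord a c (δ / (m - c)) := by
    ext y i
    rw [ht, contractCoord, Function.update_apply, div_mul_eq_mul_div]
  have hT := measurable_contractCoord a c (δ / (m - c))
  subst ht'
  refine ⟨?_, ?_, ?_⟩
  · change ∀ᵐ y ∂(μ.map _), (fun _ => c) ≤ y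
    rw [ae_map_iff hT.aemeasurable measurableSet_Ici]
    filter_upwards [hsupp] with y hy using le_contractCoord_apply a c hs_le hy
  · calc W1 l1dist μ (μ.map _)
        ≤ ∫ y, l1dist y (contractCoord a c (δ / (m - c)) y) ∂μ :=
          W1_map_le_integral l1dist_nonneg measurable_l1dist_uncurry μ hT
      _ = δ := by
          rw [integral_l1dist_contractCoord a c μ (by positivity) (hμ a)
            (hsupp.mono fun y hy => hy a), ← hm, hδs]
  · rw [integral_map hT.aemeasurable (measurable_pi_apply a).aestronglyMeasurable,
      integral_contractCoord_apply_self a c _ μ (hμ a), ← hm, hδs]
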